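/- arXiv:2103.16495 — 4 statements merged into one kernel-verified Lean document; each statement's English description precedes it below -/
import Mathlib

section
/- Mann's theorem: Let D be a (v,k,λ)-BIBD with b blocks and replication number r, with r > λ. If s blocks of D are identical (i.e., some block occurs with multiplicity s), then b/v ≥ s (equivalently r/k ≥ s). -/
/-!
Let `A` be the repeated block and `z = b • 𝟙_A - r`, so that `∑ z = 0` because `b k = v r`.
The block sums `t j = ∑ x ∈ B j, z x` satisfy `∑ t = r ∑ z = 0` and, since the incidence
matrix satisfies `N Nᵀ = (r - λ) I + λ J`, `∑ t² = (r - λ) ∑ z² = (r - λ) b k (b - r)`.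
On the `s` copies of `A`, `t` is constant equal to `k (b - r) = (v - 1)(r - λ)`, so
Cauchy–Schwarz on the other `b - s` blocks gives `s k (b - r) ≤ (b - s)(r - λ)`,
that is `s (v - 1) ≤ b - s`.
-/

open Finset

theorem card_mul_sq_le_of_sum_eq_zero {ι R : Type*} [Fintype ι] [CommRing R]
    [LinearOrder R] [IsStrictOrderedRing R] (t : ι → R) (S : Finset ι) (T : R)
    (hsum : ∑ j, t j = 0) (hS : ∀ j ∈ S, t j = T) :
    Fintype.card ι * #S * T ^ 2 ≤ (Fintype.card ι - #S) * ∑ j, t j ^ 2 := by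
  classical
  have hsplit : ∀ f : ι → R, ∑ j, f j = ∑ j ∈ S, f j + ∑ j ∈ Sᶜ, f j := fun f =>
    (sum_add_sum_compl S f).symm
  have hcompl : ∑ j ∈ Sᶜ, t j = -(#S * T) := by
    rw [hsplit, sum_congr rfl hS, sum_const, nsmul_eq_mul] at hsum
    linear_combination hsum
  have hcs := sq_sum_le_card_mul_sum_sq (s := Sᶜ) (f := t)
  rw [hcompl, card_compl, Nat.cast_sub (card_le_univ S)] at hcs
  rw [hsplit, sum_congr rfl (fun j hj => by rw [hS j hj]), sum_const, nsmul_eq_mul]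
  linear_combination hcs

section IncidenceSums

variable {α ι R : Type*} [Fintype α] [DecidableEq α] [Fintype ι] (B : ι → Finset α)

theorem sum_sum_mem_eq_mul_sum [CommSemiring R] {r : ℕ} (hrep : ∀ p, #{i | p ∈ B i} = r)
    (z : α → R) : ∑ i, ∑ x ∈ B i, z x = r * ∑ x, z x := by
  rw [sum_comm' (t' := univ) (s' := fun x => {i | x ∈ B i}) (by simp), mul_sum]
  simp only [sum_const, hrep, nsmul_eq_mul]

theorem sum_sq_sum_mem_eq [CommRing R] {r lam : ℕ} (hrep : ∀ p, #{i | p ∈ B i} = r)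
    (hpair : ∀ p q, p ≠ q → #{i | p ∈ B i ∧ q ∈ B i} = lam) (z : α → R) :
    ∑ i, (∑ x ∈ B i, z x) ^ 2 = ((r : R) - lam) * ∑ x, z x ^ 2 + lam * (∑ x, z x) ^ 2 := by
  have hcount : ∀ p q : α,
      (#{i | p ∈ B i ∧ q ∈ B i} : R) = lam + if p = q then (r : R) - lam else 0 := by
    intro p q
    split_ifs with h
    · subst h; simp [hrep]
    · simp [hpair p q h]
  calc ∑ i, (∑ x ∈ B i, z x) ^ 2
      = ∑ i, ∑ pq ∈ B i ×ˢ B i, z pq.1 * z pq.2 := by simp_rw [sq, sum_mul_sum, sum_product]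
    _ = ∑ pq : α × α, #{i | pq.1 ∈ B i ∧ pq.2 ∈ B i} * (z pq.1 * z pq.2) := by
        rw [sum_comm' (t' := univ) (s' := fun pq => {i | pq.1 ∈ B i ∧ pq.2 ∈ B i})
          (by simp [mem_product])]
        simp only [sum_const, nsmul_eq_mul]
    _ = ((r : R) - lam) * ∑ x, z x ^ 2 + lam * (∑ x, z x) ^ 2 := by
        simp_rw [Fintype.sum_prod_type, hcount, add_mul, sum_add_distrib, ite_mul, zero_mul,
          sum_ite_eq, mem_univ, if_true, sq, sum_mul_sum, mul_sum]
        exact add_comm _ _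

theorem card_mul_eq_card_mul {k r : ℕ} (hcard : ∀ i, #(B i) = k)
    (hrep : ∀ p, #{i | p ∈ B i} = r) : Fintype.card ι * k = Fintype.card α * r := by
  simpa [hcard, mul_comm] using sum_sum_mem_eq_mul_sum B hrep (fun _ => (1 : ℕ))

theorem mul_sub_one_eq_mul_card_sub_one [Nonempty α] {k r lam : ℕ} (hcard : ∀ i, #(B i) = k)
    (hrep : ∀ p, #{i | p ∈ B i} = r) (hpair : ∀ p q, p ≠ q → #{i | p ∈ B i ∧ q ∈ B i} = lam) :
    (r : ℤ) * (k - 1) = lam * (Fintype.card α - 1) := by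
  have hsq := sum_sq_sum_mem_eq B hrep hpair (fun _ => (1 : ℤ))
  simp only [hcard, sum_const, card_univ, nsmul_eq_mul, one_pow, mul_one] at hsq
  have hbk : (Fintype.card ι : ℤ) * k = Fintype.card α * r := by
    exact_mod_cast card_mul_eq_card_mul B hcard hrep
  have hv : (0 : ℤ) < Fintype.card α := by exact_mod_cast Fintype.card_pos
  apply mul_left_cancel₀ hv.ne'
  linear_combination hsq - k * hbk

theorem card_mul_le_of_forall_mem_eq {k r lam : ℕ} (hcard : ∀ i, #(B i) = k)
    (hrep : ∀ p, #{i | p ∈ B i} = r) (hpair : ∀ p q, p ≠ q → #{i | p ∈ B i ∧ q ∈ B i} = lam)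
    {S : Finset ι} {i₀ : ι} (hS : ∀ j ∈ S, B j = B i₀)
    (hpos : 0 < (k : ℤ) * (Fintype.card ι - r)) :
    (#S : ℤ) * (k * (Fintype.card ι - r)) ≤ (Fintype.card ι - #S) * (r - lam) := by
  have hbk : (Fintype.card ι : ℤ) * k = Fintype.card α * r := by
    exact_mod_cast card_mul_eq_card_mul B hcard hrep
  set b : ℤ := (Fintype.card ι : ℤ)
  set T : ℤ := k * (b - r)
  set z : α → ℤ := fun x => b * (if x ∈ B i₀ then 1 else 0) - r
  have hz_sum : ∑ x, z x = 0 := by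
    simp only [z, sum_sub_distrib, ← mul_sum, sum_boole, filter_mem_eq_inter, univ_inter, hcard,
      sum_const, card_univ, nsmul_eq_mul]
    linear_combination hbk
  have hz_sq : ∑ x, z x ^ 2 = b * T := by
    have hpt : ∀ x, z x ^ 2 = (b ^ 2 - 2 * b * r) * (if x ∈ B i₀ then 1 else 0) + (r : ℤ) ^ 2 := by
      intro x; simp only [z]; split_ifs <;> ring
    simp only [hpt, sum_add_distrib, ← mul_sum, sum_boole, filter_mem_eq_inter, univ_inter, hcard,
      sum_const, card_univ, nsmul_eq_mul]
    linear_combination (-(r : ℤ)) * hbk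
  set t : ι → ℤ := fun j => ∑ x ∈ B j, z x
  have ht_sum : ∑ j, t j = 0 := by
    rw [sum_sum_mem_eq_mul_sum B hrep, hz_sum, mul_zero]
  have ht_sq : ∑ j, t j ^ 2 = (r - lam) * (b * T) := by
    rw [sum_sq_sum_mem_eq B hrep hpair, hz_sum, hz_sq]
    ring
  have htS : ∀ j ∈ S, t j = T := by
    intro j hj
    calc t j = ∑ _x ∈ B i₀, (b - r) := sum_congr (hS j hj) (fun x hx => by simp [z, hx])
      _ = T := by rw [sum_const, hcard, nsmul_eq_mul]
  have hvar := card_mul_sq_le_of_sum_eq_zero t S T ht_sum htS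
  rw [ht_sq] at hvar
  have hbT : 0 < b * T := mul_pos (by linarith [pos_of_mul_pos_right hpos k.cast_nonneg]) hpos
  refine le_of_mul_le_mul_right ?_ hbT
  linear_combination hvar

end IncidenceSums

theorem mann_theorem_general (v b r k lam s : ℕ) (hrl : lam < r)
    (B : Fin b → Finset (Fin v))
    (hcard : ∀ i, (B i).card = k)
    (hrep : ∀ p, (Finset.univ.filter (fun i => p ∈ B i)).card = r)
    (hpair : ∀ p q : Fin v, p ≠ q →
      (Finset.univ.filter (fun i => p ∈ B i ∧ q ∈ B i)).card = lam)
    (S : Finset (Fin b)) (hS : S.card = s)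
    (hident : ∀ i ∈ S, ∀ j ∈ S, B i = B j) :
    s * v ≤ b := by
  have hsb : s ≤ b := by simpa [hS] using card_le_univ S
  rcases le_or_gt v 1 with hv1 | hv2
  · exact (mul_le_of_le_one_right s.zero_le hv1).trans hsb
  rcases S.eq_empty_or_nonempty with rfl | ⟨i₀, hi₀⟩
  · simp [← hS]
  have : Nonempty (Fin v) := ⟨⟨0, by omega⟩⟩
  have hbk : (b : ℤ) * k = v * r := by
    simpa using congrArg ((↑) : ℕ → ℤ) (card_mul_eq_card_mul B hcard hrep)
  have hrk : (r : ℤ) * (k - 1) = lam * (v - 1) := by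
    simpa using mul_sub_one_eq_mul_card_sub_one B hcard hrep hpair
  have hT : (k : ℤ) * (b - r) = (v - 1) * (r - lam) := by linear_combination hbk - hrk
  have hrl' : (0 : ℤ) < r - lam := sub_pos.2 (by exact_mod_cast hrl)
  have hpos : 0 < (k : ℤ) * (b - r) := hT ▸ mul_pos (by omega) hrl'
  have hmann := card_mul_le_of_forall_mem_eq B hcard hrep hpair
    (fun j hj => hident j hj i₀ hi₀) (by simpa using hpos)
  rw [Fintype.card_fin, hT, hS, ← mul_assoc] at hmann
  have := le_of_mul_le_mul_right hmann hrl'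
  zify
  linarith

/-- Mann's theorem: in a (v,k,λ)-BIBD with r > λ, if some block occurs with
    multiplicity s then b/v ≥ s, i.e. s·v ≤ b. -/
theorem mann_theorem (v b r k lam s : ℕ) (hv : 1 ≤ v) (hrl : lam < r)
    (B : Fin b → Finset (Fin v))
    (hcard : ∀ i, (B i).card = k)
    (hrep : ∀ p, (Finset.univ.filter (fun i => p ∈ B i)).card = r)
    (hpair : ∀ p q : Fin v, p ≠ q →
      (Finset.univ.filter (fun i => p ∈ B i ∧ q ∈ B i)).card = lam)
    (S : Finset (Fin b)) (hS : S.card = s)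
    (hident : ∀ i ∈ S, ∀ j ∈ S, B i = B j) :
    s * v ≤ b :=
  mann_theorem_general v b r k lam s hrl B hcard hrep hpair S hS hident
end

section
/- In a (6λ-2, 2λ, λ)-balanced incomplete block design with λ ≥ 1, no two blocks are identical (every block has multiplicity 1). -/
open Finset

lemma cs_nat {α : Type*} (s : Finset α) (f : α → ℕ) :
    (∑ x ∈ s, f x) ^ 2 ≤ s.card * ∑ x ∈ s, (f x) ^ 2 := by
  have := sq_sum_le_card_mul_sum_sq (s := s) (f := fun x => (f x : ℤ))
  have h2 : ((∑ x ∈ s, f x : ℕ) : ℤ) ^ 2 ≤ ((s.card * ∑ x ∈ s, (f x) ^ 2 : ℕ) : ℤ) := by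
    push_cast
    exact this
  exact_mod_cast h2

set_option maxHeartbeats 1000000 in
/-- In a (6λ-2, 2λ, λ)-BIBD with λ ≥ 1, no two blocks are identical. -/
theorem no_repeated_blocks_quasi_residual (lam b : ℕ) (hlam : 1 ≤ lam)
    (B : Fin b → Finset (Fin (6 * lam - 2)))
    (hcard : ∀ i, (B i).card = 2 * lam)
    (hrep : ∀ p, (Finset.univ.filter (fun i => p ∈ B i)).card = 3 * lam)
    (hpair : ∀ p q, p ≠ q →
      (Finset.univ.filter (fun i => p ∈ B i ∧ q ∈ B i)).card = lam) :
    Function.Injective B := by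
  obtain ⟨m, rfl⟩ : ∃ m, lam = m + 1 := ⟨lam - 1, by omega⟩
  intro i j hij
  by_contra hne
  -- Step A: determine b
  have key : ∑ t : Fin b, (B t).card = ∑ p : Fin (6 * (m + 1) - 2),
      (Finset.univ.filter (fun t => p ∈ B t)).card := by
    have h1 : ∀ t, (B t).card =
        ∑ p : Fin (6 * (m + 1) - 2), if p ∈ B t then 1 else 0 := by
      intro t
      rw [← card_filter]
      congr 1
      ext p
      simp
    simp_rw [h1, card_filter]
    exact Finset.sum_comm
  simp_rw [hcard, hrep, Finset.sum_const, Finset.card_univ, Fintype.card_fin,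
    smul_eq_mul] at key
  have hbval : b = 9 * m + 6 := by
    have h62 : 6 * (m + 1) - 2 = 6 * m + 4 := by omega
    rw [h62] at key
    apply Nat.eq_of_mul_eq_mul_left (show 0 < 2 * (m + 1) by omega)
    calc 2 * (m + 1) * b = b * (2 * (m + 1)) := by ring
      _ = (6 * m + 4) * (3 * (m + 1)) := key
      _ = 2 * (m + 1) * (9 * m + 6) := by ring
  set S := B i with hS
  have hSj : B j = S := hij.symm
  set x : Fin b → ℕ := fun t => (S ∩ B t).card with hx
  have hxf : ∀ t, x t = ∑ p ∈ S, if p ∈ B t then 1 else 0 := by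
    intro t
    have h : S ∩ B t = S.filter (fun p => p ∈ B t) := by
      ext p; simp [Finset.mem_inter]
    rw [hx]
    simp only
    rw [h, card_filter]
  have hScard : S.card = 2 * (m + 1) := hcard i
  -- Sum 1
  have hsum1 : ∑ t : Fin b, x t = 6 * (m + 1) ^ 2 := by
    simp_rw [hxf]
    rw [Finset.sum_comm]
    have h1 : ∀ p ∈ S, (∑ t : Fin b, if p ∈ B t then 1 else 0) = 3 * (m + 1) := by
      intro p _
      rw [← card_filter]
      exact hrep p
    rw [Finset.sum_congr rfl h1, Finset.sum_const, hScard, smul_eq_mul]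
    ring
  -- Sum 2
  have hsum2 : ∑ t : Fin b, (x t) ^ 2 = 4 * (m + 1) ^ 3 + 4 * (m + 1) ^ 2 := by
    have hxsq : ∀ t, (x t) ^ 2 = ∑ p ∈ S, ∑ q ∈ S, if p ∈ B t ∧ q ∈ B t then 1 else 0 := by
      intro t
      rw [hxf, sq, Finset.sum_mul_sum]
      refine Finset.sum_congr rfl fun p _ => Finset.sum_congr rfl fun q _ => ?_
      by_cases hp : p ∈ B t <;> by_cases hq : q ∈ B t <;> simp [hp, hq]
    simp_rw [hxsq]
    rw [Finset.sum_comm]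
    have inner1 : ∀ p ∈ S, (∑ t : Fin b, ∑ q ∈ S, if p ∈ B t ∧ q ∈ B t then 1 else 0)
        = 3 * (m + 1) + (2 * m + 1) * (m + 1) := by
      intro p hp
      rw [Finset.sum_comm]
      have h2 : ∀ q ∈ S, (∑ t : Fin b, if p ∈ B t ∧ q ∈ B t then 1 else 0)
          = if q = p then 3 * (m + 1) else (m + 1) := by
        intro q _
        rw [← card_filter]
        by_cases hqp : q = p
        · subst hqp
          rw [if_pos rfl]
          have : (Finset.univ.filter (fun t => q ∈ B t ∧ q ∈ B t)) =
              (Finset.univ.filter (fun t => q ∈ B t)) := by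
            congr 1
            ext t
            simp
          rw [this]
          exact hrep q
        · rw [if_neg hqp]
          exact hpair p q (fun h => hqp h.symm)
      rw [Finset.sum_congr rfl h2, ← Finset.add_sum_erase S _ hp, if_pos rfl]
      have herase : ∑ q ∈ S.erase p, (if q = p then 3 * (m + 1) else (m + 1))
          = (2 * m + 1) * (m + 1) := by
        rw [Finset.sum_congr rfl (fun q hq => if_neg (Finset.ne_of_mem_erase hq)),
          Finset.sum_const, Finset.card_erase_of_mem hp, hScard, smul_eq_mul]
        all_goals (congr 1 <;> omega)
      rw [herase]
    rw [Finset.sum_congr rfl inner1, Finset.sum_const, hScard, smul_eq_mul]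
    ring
  -- values at i and j
  have hxi : x i = 2 * (m + 1) := by
    rw [hx]; simp only [← hS, Finset.inter_self]; exact hScard
  have hxj : x j = 2 * (m + 1) := by
    rw [hx]; simp only [hSj, Finset.inter_self]; exact hScard
  -- split off {i, j}
  set U := (Finset.univ : Finset (Fin b)) \ {i, j} with hU
  have hsubset : ({i, j} : Finset (Fin b)) ⊆ Finset.univ := Finset.subset_univ _
  have hpairsum : ∀ f : Fin b → ℕ, ∑ t ∈ ({i, j} : Finset (Fin b)), f t = f i + f j :=
    fun f => Finset.sum_pair hne
  have hsplit1 : ∑ t ∈ U, x t + (x i + x j) = ∑ t : Fin b, x t := by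
    rw [← hpairsum x]
    exact Finset.sum_sdiff hsubset
  have hsplit2 : ∑ t ∈ U, (x t) ^ 2 + ((x i) ^ 2 + (x j) ^ 2) = ∑ t : Fin b, (x t) ^ 2 := by
    rw [← hpairsum (fun t => (x t) ^ 2)]
    exact Finset.sum_sdiff hsubset
  have hcardU : U.card + 2 = b := by
    have := Finset.card_sdiff_add_card_eq_card hsubset
    rwa [Finset.card_pair hne, Finset.card_univ, Fintype.card_fin] at this
  -- Cauchy-Schwarz
  have hCS := cs_nat U x
  set A := ∑ t ∈ U, x t with hA
  set Q := ∑ t ∈ U, (x t) ^ 2 with hQ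
  rw [hsum1, hxi, hxj] at hsplit1
  rw [hsum2, hxi, hxj] at hsplit2
  have hc : U.card = 9 * m + 4 := by omega
  rw [hc] at hCS
  -- now derive the contradiction over ℤ
  have hAz : (A : ℤ) = 6 * (m : ℤ) ^ 2 + 8 * m + 2 := by
    have h : (A : ℤ) + (2 * ((m : ℤ) + 1) + 2 * ((m : ℤ) + 1)) = 6 * ((m : ℤ) + 1) ^ 2 := by
      exact_mod_cast hsplit1
    linarith [h, sq_nonneg ((m : ℤ) + 1), (by ring : 6 * ((m : ℤ) + 1) ^ 2 = 6 * (m : ℤ) ^ 2 + 12 * m + 6)]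
  have hQz : (Q : ℤ) = 4 * (m : ℤ) ^ 3 + 8 * m ^ 2 + 4 * m := by
    have h : (Q : ℤ) + ((2 * ((m : ℤ) + 1)) ^ 2 + (2 * ((m : ℤ) + 1)) ^ 2)
        = 4 * ((m : ℤ) + 1) ^ 3 + 4 * ((m : ℤ) + 1) ^ 2 := by
      exact_mod_cast hsplit2
    nlinarith [h]
  have hCSz : (A : ℤ) ^ 2 ≤ (9 * (m : ℤ) + 4) * Q := by exact_mod_cast hCS
  rw [hAz, hQz] at hCSz
  have hm0 : (0 : ℤ) ≤ (m : ℤ) := Int.natCast_nonneg m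
  nlinarith [hCSz, hm0, mul_nonneg hm0 hm0, mul_nonneg (mul_nonneg hm0 hm0) hm0]
end

section
/- If a binary self-orthogonal linear code C of length 25 contains 16 codewords forming the rows of the augmented incidence matrix of a (16,6,3)-design, then the minimum distance of C is at least 4. -/
theorem design_no_repeat (B : Fin 24 → Finset (Fin 16))
    (hcard : ∀ i, (B i).card = 6)
    (hrep : ∀ p, (Finset.univ.filter (fun i => p ∈ B i)).card = 9)
    (hpair : ∀ p q : Fin 16, p ≠ q →
      (Finset.univ.filter (fun i => p ∈ B i ∧ q ∈ B i)).card = 3)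
    {bi bj : Fin 24} (hne : bi ≠ bj) : B bi ≠ B bj := by
  intro heq
  set x : Fin 24 → ℕ := fun k => (B bi ∩ B k).card with hx
  have hxk : ∀ k, x k = ∑ p ∈ B bi, if p ∈ B k then 1 else 0 := by
    intro k
    rw [hx]
    simp only [← Finset.filter_mem_eq_inter]
    rw [Finset.card_filter]
  have hsum : ∑ k, x k = 54 := by
    simp only [hxk]
    rw [Finset.sum_comm]
    have : ∀ p ∈ B bi, (∑ k : Fin 24, if p ∈ B k then (1:ℕ) else 0) = 9 := by
      intro p _
      rw [← Finset.card_filter]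
      exact hrep p
    rw [Finset.sum_congr rfl this, Finset.sum_const, hcard]
    norm_num
  have hsq : ∑ k, x k ^ 2 = 144 := by
    have step : ∀ k, x k ^ 2 = ∑ p ∈ B bi, ∑ q ∈ B bi,
        if p ∈ B k ∧ q ∈ B k then 1 else 0 := by
      intro k
      rw [sq, hxk, Finset.sum_mul_sum]
      refine Finset.sum_congr rfl fun p _ => Finset.sum_congr rfl fun q _ => ?_
      by_cases hp : p ∈ B k <;> by_cases hq : q ∈ B k <;> simp [hp, hq]
    simp only [step]
    rw [Finset.sum_comm]
    have inner : ∀ p ∈ B bi, (∑ q ∈ B bi, ∑ k : Fin 24,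
        if p ∈ B k ∧ q ∈ B k then (1:ℕ) else 0) = 24 := by
      intro p hp
      have : ∀ q ∈ B bi, (∑ k : Fin 24, if p ∈ B k ∧ q ∈ B k then (1:ℕ) else 0)
          = if p = q then 9 else 3 := by
        intro q _
        rw [← Finset.card_filter]
        by_cases h : p = q
        · subst h
          simp only [and_self, if_pos rfl]
          exact hrep p
        · rw [if_neg h]
          exact hpair p q h
      rw [Finset.sum_congr rfl this]
      have : ∀ q ∈ B bi, (if p = q then (9:ℕ) else 3) = 3 + if p = q then 6 else 0 := by
        intro q _; by_cases h : p = q <;> simp [h]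
      rw [Finset.sum_congr rfl this, Finset.sum_add_distrib, Finset.sum_const, hcard,
        Finset.sum_ite_eq (B bi) p (fun _ => 6), if_pos hp]
      norm_num
    have fin : ∀ p ∈ B bi, (∑ k : Fin 24, ∑ q ∈ B bi,
        if p ∈ B k ∧ q ∈ B k then (1:ℕ) else 0) = 24 := by
      intro p hp
      rw [Finset.sum_comm]
      exact inner p hp
    rw [Finset.sum_congr rfl fin, Finset.sum_const, hcard]
    norm_num
  have hxi : x bi = 6 := by
    rw [hx]; simp only [Finset.inter_self]; exact hcard bi
  have hxj : x bj = 6 := by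
    rw [hx]; simp only [← heq, Finset.inter_self]; exact hcard bi
  have hsub : ({bi, bj} : Finset (Fin 24)) ⊆ Finset.univ := Finset.subset_univ _
  set s : Finset (Fin 24) := Finset.univ \ {bi, bj} with hs
  have hcards : s.card = 22 := by
    rw [hs, Finset.card_sdiff_of_subset hsub, Finset.card_univ, Finset.card_pair hne]
    rfl
  have hsplit := Finset.sum_sdiff (f := x) hsub
  rw [Finset.sum_pair hne, hxi, hxj, hsum] at hsplit
  rw [← hs] at hsplit
  have hsum1 : ∑ k ∈ s, x k = 42 := by omega
  have hsplit2 := Finset.sum_sdiff (f := fun k => x k ^ 2) hsub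
  rw [Finset.sum_pair hne, hxi, hxj, hsq] at hsplit2
  rw [← hs] at hsplit2
  norm_num at hsplit2
  have hsq1 : ∑ k ∈ s, x k ^ 2 = 72 := by omega
  have cs := sq_sum_le_card_mul_sum_sq (s := s) (f := x)
  rw [hsum1, hsq1, hcards] at cs
  norm_num at cs

/-- A binary self-orthogonal (25-coordinate) code containing the 16 rows of the
    augmented incidence matrix of a (16,6,3)-design has minimum distance ≥ 4. -/
theorem code_with_design_min_distance_ge_four
    (C : Submodule (ZMod 2) (Fin 25 → ZMod 2))
    (hso : ∀ c ∈ C, ∀ c' ∈ C, ∑ j, c j * c' j = 0)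
    (B : Fin 24 → Finset (Fin 16))
    (hcard : ∀ i, (B i).card = 6)
    (hrep : ∀ p, (Finset.univ.filter (fun i => p ∈ B i)).card = 9)
    (hpair : ∀ p q : Fin 16, p ≠ q →
      (Finset.univ.filter (fun i => p ∈ B i ∧ q ∈ B i)).card = 3)
    (row : Fin 16 → Fin 25 → ZMod 2)
    (hrow : ∀ p, row p = Fin.snoc (fun i : Fin 24 => if p ∈ B i then 1 else 0) 1)
    (hmem : ∀ p, row p ∈ C) :
    ∀ c ∈ C, c ≠ 0 → 4 ≤ (Finset.univ.filter (fun j => c j ≠ 0)).card := by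
  intro c hc hc0
  by_contra hlt
  push_neg at hlt
  set S := Finset.univ.filter (fun j => c j ≠ 0) with hS
  have hone : ∀ j ∈ S, c j = 1 := by
    intro j hj
    have hne : c j ≠ 0 := (Finset.mem_filter.mp hj).2
    have : ∀ a : ZMod 2, a ≠ 0 → a = 1 := by decide
    exact this _ hne
  have hsumc : ∑ j, c j = 0 := by
    have h := hso c hc c hc
    have hmul : ∀ a : ZMod 2, a * a = a := by decide
    simpa only [hmul] using h
  have hcast : ((S.card : ℕ) : ZMod 2) = 0 := by
    calc ((S.card : ℕ) : ZMod 2) = ∑ _j ∈ S, (1 : ZMod 2) := by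
          rw [Finset.sum_const, nsmul_eq_mul, mul_one]
      _ = ∑ j ∈ S, c j := Finset.sum_congr rfl (fun j hj => (hone j hj).symm)
      _ = ∑ j, c j := by rw [hS]; exact Finset.sum_filter_ne_zero Finset.univ
      _ = 0 := hsumc
  have heven : 2 ∣ S.card := (ZMod.natCast_eq_zero_iff _ 2).mp hcast
  have hpos : S.card ≠ 0 := by
    intro h
    apply hc0
    funext j
    by_contra hj
    have : j ∈ S := Finset.mem_filter.mpr ⟨Finset.mem_univ j, hj⟩
    rw [Finset.card_eq_zero.mp h] at this
    exact absurd this (Finset.notMem_empty j)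
  have h2 : S.card = 2 := by omega
  obtain ⟨i, j, hij, hSij⟩ := Finset.card_eq_two.mp h2
  have hci : c i = 1 := hone i (by rw [hSij]; exact Finset.mem_insert_self i {j})
  have hcj : c j = 1 := hone j (by rw [hSij]; simp)
  have horth : ∀ p, row p i = row p j := by
    intro p
    have h0 := hso (row p) (hmem p) c hc
    have hsub : ∑ k ∈ S, row p k * c k = ∑ k, row p k * c k := by
      apply Finset.sum_subset (Finset.subset_univ S)
      intro k _ hk
      have hck : c k = 0 := by
        by_contra h
        exact hk (Finset.mem_filter.mpr ⟨Finset.mem_univ k, h⟩)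
      rw [hck, mul_zero]
    have hS2 : row p i * c i + row p j * c j = 0 := by
      rw [← Finset.sum_pair (f := fun k => row p k * c k) hij, ← hSij, hsub, h0]
    rw [hci, hcj, mul_one, mul_one] at hS2
    have : ∀ a b : ZMod 2, a + b = 0 → a = b := by decide
    exact this _ _ hS2
  -- case analysis on the two support coordinates
  have hfull : ∀ (b : Fin 24), (∀ p : Fin 16, p ∈ B b) → False := by
    intro b hall
    have : B b = Finset.univ := Finset.eq_univ_iff_forall.mpr hall
    have h6 := hcard b
    rw [this, Finset.card_univ] at h6
    simp at h6
  rcases Fin.eq_castSucc_or_eq_last i with ⟨a, rfl⟩ | rfl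
  · rcases Fin.eq_castSucc_or_eq_last j with ⟨b, rfl⟩ | rfl
    · -- two incidence columns equal: repeated blocks
      have hab : a ≠ b := fun h => hij (by rw [h])
      apply design_no_repeat B hcard hrep hpair hab
      ext p
      have := horth p
      rw [hrow p, Fin.snoc_castSucc, Fin.snoc_castSucc] at this
      by_cases hpa : p ∈ B a <;> by_cases hpb : p ∈ B b <;>
        simp [hpa, hpb] at this ⊢
    · -- column a equals all-ones column
      apply hfull a
      intro p
      have := horth p
      rw [hrow p, Fin.snoc_castSucc, Fin.snoc_last] at this
      by_contra hpb
      rw [if_neg hpb] at this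
      exact one_ne_zero this.symm
  · rcases Fin.eq_castSucc_or_eq_last j with ⟨b, rfl⟩ | rfl
    · apply hfull b
      intro p
      have := horth p
      rw [hrow p, Fin.snoc_castSucc, Fin.snoc_last] at this
      by_contra hpb
      rw [if_neg hpb] at this
      exact one_ne_zero this
    · exact hij rfl
end

section
/- In a (v,k,λ)-BIBD with 2 ≤ k < v (so r > λ), any block occurs with multiplicity at most ⌊b/v⌋; consequently, if b < 2v then all blocks are distinct. -/
open Finset

/-- Mann's theorem key inequality: the multiplicity of any block times `v` is at most `b`. -/
private lemma mann_key (v b r k lam : ℕ) (hk2 : 2 ≤ k) (hkv : k < v)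
    (B : Fin b → Finset (Fin v))
    (hcard : ∀ i, (B i).card = k)
    (hrep : ∀ p, (Finset.univ.filter (fun i => p ∈ B i)).card = r)
    (hpair : ∀ p q : Fin v, p ≠ q →
      (Finset.univ.filter (fun i => p ∈ B i ∧ q ∈ B i)).card = lam)
    (i : Fin b) :
    (Finset.univ.filter (fun j => B j = B i)).card * v ≤ b := by
  classical
  have hb0 : 0 < b := i.pos
  have hv0 : 0 < v := by omega
  set S : Finset (Fin b) := Finset.univ.filter (fun j => B j = B i) with hSdef
  have hiS : i ∈ S := by simp [hSdef]
  set s : ℕ := S.card with hsdef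
  have hs0 : 0 < s := Finset.card_pos.mpr ⟨i, hiS⟩
  -- incidence indicator
  set n : Fin v → Fin b → ℚ := fun p j => if p ∈ B j then 1 else 0 with hndef
  have F1 : ∀ p, ∑ j, n p j = (r : ℚ) := by
    intro p
    simp only [hndef]
    rw [Finset.sum_boole, hrep p]
  have F3 : ∀ j, ∑ p, n p j = (k : ℚ) := by
    intro j
    simp only [hndef]
    rw [Finset.sum_boole]
    norm_cast
    rw [Finset.filter_univ_mem, hcard j]
  have F2 : ∀ p q : Fin v, p ≠ q → ∑ j, n p j * n q j = (lam : ℚ) := by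
    intro p q hpq
    have e : ∀ j, n p j * n q j = if (p ∈ B j ∧ q ∈ B j) then (1:ℚ) else 0 := by
      intro j
      by_cases h1 : p ∈ B j <;> by_cases h2 : q ∈ B j <;> simp [hndef, h1, h2]
    rw [Finset.sum_congr rfl (fun j _ => e j), Finset.sum_boole, hpair p q hpq]
  have F2s : ∀ p : Fin v, ∑ j, n p j * n p j = (r : ℚ) := by
    intro p
    have e : ∀ j, n p j * n p j = n p j := by
      intro j; by_cases h : p ∈ B j <;> simp [hndef, h]
    rw [Finset.sum_congr rfl (fun j _ => e j), F1]
  -- basic identities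
  have I1 : (v:ℚ) * r = (b:ℚ) * k := by
    have h1 : ∑ p : Fin v, ∑ j : Fin b, n p j = (v:ℚ) * r := by
      simp [F1, Finset.card_univ, mul_comm]
    have h2 : ∑ p : Fin v, ∑ j : Fin b, n p j = (b:ℚ) * k := by
      rw [Finset.sum_comm]
      simp [F3, Finset.card_univ, mul_comm]
    linarith
  obtain ⟨p0, hp0⟩ : ∃ p0 : Fin v, p0 ∈ B i := by
    have : (B i).Nonempty := by rw [← Finset.card_pos, hcard i]; omega
    exact this
  have hr1 : 1 ≤ r := by
    rw [← hrep p0]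
    exact Finset.card_pos.mpr ⟨i, by simp [hp0]⟩
  have I2 : (r:ℚ) * ((k:ℚ) - 1) = (lam:ℚ) * ((v:ℚ) - 1) := by
    have h1 : ∑ q ∈ Finset.univ.erase p0, ∑ j, n p0 j * n q j
        = (lam:ℚ) * ((v:ℚ) - 1) := by
      rw [Finset.sum_congr rfl (fun q hq => F2 p0 q (Ne.symm (Finset.ne_of_mem_erase hq)))]
      rw [Finset.sum_const, Finset.card_erase_of_mem (Finset.mem_univ p0), Finset.card_univ]
      have : 1 ≤ v := hv0
      simp [nsmul_eq_mul]
      push_cast [Nat.cast_sub this]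
      ring
    have h2 : ∑ q ∈ Finset.univ.erase p0, ∑ j, n p0 j * n q j
        = (r:ℚ) * ((k:ℚ) - 1) := by
      rw [Finset.sum_comm]
      have e : ∀ j, ∑ q ∈ Finset.univ.erase p0, n p0 j * n q j
          = n p0 j * (k:ℚ) - n p0 j * n p0 j := by
        intro j
        rw [← Finset.mul_sum, Finset.sum_erase_eq_sub (Finset.mem_univ p0), F3]
        ring
      rw [Finset.sum_congr rfl (fun j _ => e j), Finset.sum_sub_distrib,
        ← Finset.sum_mul, F1, F2s]
      ring
    linarith
  -- r > lam
  have hlam1 : 1 ≤ lam := by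
    by_contra h
    have : lam = 0 := by omega
    subst this
    have hkQ : (2:ℚ) ≤ (k:ℚ) := by exact_mod_cast hk2
    have hrQ : (1:ℚ) ≤ (r:ℚ) := by exact_mod_cast hr1
    simp only [Nat.cast_zero] at I2
    nlinarith
  have hrl : (lam:ℚ) < (r:ℚ) := by
    have hkQ : (2:ℚ) ≤ (k:ℚ) := by exact_mod_cast hk2
    have hkvQ : (k:ℚ) < (v:ℚ) := by exact_mod_cast hkv
    have hlQ : (1:ℚ) ≤ (lam:ℚ) := by exact_mod_cast hlam1
    nlinarith
  -- r < b
  have hrb : (r:ℚ) < (b:ℚ) := by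
    have hkQ : (2:ℚ) ≤ (k:ℚ) := by exact_mod_cast hk2
    have hkvQ : (k:ℚ) < (v:ℚ) := by exact_mod_cast hkv
    have hrQ : (1:ℚ) ≤ (r:ℚ) := by exact_mod_cast hr1
    nlinarith
  -- the vectors
  obtain ⟨u, hudef⟩ : ∃ u : Fin b → ℚ, ∀ j, u j = (if j ∈ S then (b:ℚ) else 0) - s :=
    ⟨_, fun _ => rfl⟩
  obtain ⟨w, hwp⟩ : ∃ w : Fin v → ℚ, ∀ p, w p = ∑ j, n p j * u j :=
    ⟨_, fun _ => rfl⟩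
  obtain ⟨t, htj⟩ : ∃ t : Fin b → ℚ, ∀ j, t j = ∑ p, n p j * w p :=
    ⟨_, fun _ => rfl⟩
  -- closed form for w
  have Wc : ∀ p, w p = (s:ℚ) * ((if p ∈ B i then (b:ℚ) else 0) - r) := by
    intro p
    have e : ∀ j, n p j * u j
        = (if j ∈ S then (b:ℚ) * n p j else 0) - (s:ℚ) * n p j := by
      intro j
      rw [hudef j]
      split_ifs <;> ring
    rw [hwp p, Finset.sum_congr rfl (fun j _ => e j), Finset.sum_sub_distrib,
      ← Finset.mul_sum, F1]
    have e2 : ∀ j ∈ S, (b:ℚ) * n p j = (if p ∈ B i then (b:ℚ) else 0) := by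
      intro j hj
      have hBj : B j = B i := by
        simp only [hSdef, Finset.mem_filter] at hj
        exact hj.2
      simp only [hndef, hBj]
      split_ifs <;> ring
    have e3 : (∑ j, if j ∈ S then (b:ℚ) * n p j else 0)
        = ∑ j ∈ S, (b:ℚ) * n p j := by
      rw [Finset.sum_ite_mem Finset.univ S _, Finset.univ_inter]
    rw [e3, Finset.sum_congr rfl e2, Finset.sum_const, ← hsdef]
    simp only [nsmul_eq_mul]
    split_ifs <;> ring
  -- indicator sum
  have sumci : ∑ p, (if p ∈ B i then (b:ℚ) else 0) = (k:ℚ) * b := by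
    have e : ∀ p, (if p ∈ B i then (b:ℚ) else 0) = (b:ℚ) * (if p ∈ B i then (1:ℚ) else 0) := by
      intro p; split_ifs <;> ring
    rw [Finset.sum_congr rfl (fun p _ => e p), ← Finset.mul_sum, Finset.sum_boole]
    norm_cast
    rw [Finset.filter_univ_mem, hcard i]
    ring
  -- sum of w vanishes
  have sumW : ∑ p, w p = 0 := by
    rw [Finset.sum_congr rfl (fun p _ => Wc p), ← Finset.mul_sum,
      Finset.sum_sub_distrib, sumci, Finset.sum_const, Finset.card_univ]
    simp only [Fintype.card_fin, nsmul_eq_mul]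
    linear_combination (-(s:ℚ)) * I1
  -- sum of squares of w
  have W2 : ∑ p, w p ^ 2 = (s:ℚ)^2 * ((k:ℚ) * b * ((b:ℚ) - r)) := by
    have e : ∀ p, w p ^ 2 = (s:ℚ)^2 * (((b:ℚ) - 2*r) * (if p ∈ B i then (b:ℚ) else 0) + (r:ℚ)^2) := by
      intro p
      rw [Wc p]
      split_ifs <;> ring
    rw [Finset.sum_congr rfl (fun p _ => e p), ← Finset.mul_sum]
    rw [Finset.sum_add_distrib, ← Finset.mul_sum, sumci, Finset.sum_const, Finset.card_univ]
    simp only [Fintype.card_fin, nsmul_eq_mul]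
    linear_combination (s:ℚ)^2 * (r:ℚ) * I1
  -- sum of squares of u
  have U2 : ∑ j, u j ^ 2 = (b:ℚ) * s * ((b:ℚ) - s) := by
    have hsb : s ≤ b := by
      have := Finset.card_le_card (Finset.subset_univ S)
      simpa [← hsdef, Finset.card_univ] using this
    have e : ∀ j, u j ^ 2 = (((b:ℚ) - s)^2 - (s:ℚ)^2) * (if j ∈ S then (1:ℚ) else 0) + (s:ℚ)^2 := by
      intro j
      rw [hudef j]
      split_ifs <;> ring
    rw [Finset.sum_congr rfl (fun j _ => e j), Finset.sum_add_distrib, ← Finset.mul_sum,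
      Finset.sum_boole, Finset.sum_const, Finset.card_univ]
    have hScard : Finset.univ.filter (fun j => j ∈ S) = S := Finset.filter_univ_mem S
    rw [hScard, ← hsdef]
    simp only [Fintype.card_fin, nsmul_eq_mul]
    ring
  -- gamma: ⟨u, t⟩ = ⟨w, w⟩
  have G : ∑ j, u j * t j = ∑ p, w p ^ 2 := by
    have e : ∀ j, u j * t j = ∑ p, (n p j * u j) * w p := by
      intro j
      rw [htj j, Finset.mul_sum]
      exact Finset.sum_congr rfl (fun p _ => by ring)
    rw [Finset.sum_congr rfl (fun j _ => e j), Finset.sum_comm]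
    refine Finset.sum_congr rfl (fun p _ => ?_)
    rw [← Finset.sum_mul, ← hwp p]
    ring
  -- beta: ⟨t, t⟩ = (r - lam) ⟨w, w⟩
  have B2 : ∑ j, t j ^ 2 = ((r:ℚ) - lam) * ∑ p, w p ^ 2 := by
    have e1 : ∀ j, t j ^ 2 = ∑ p, ∑ q, (w p * w q) * (n p j * n q j) := by
      intro j
      rw [htj j, sq, Finset.sum_mul_sum]
      exact Finset.sum_congr rfl (fun p _ => Finset.sum_congr rfl (fun q _ => by ring))
    rw [Finset.sum_congr rfl (fun j _ => e1 j), Finset.sum_comm]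
    have e2 : ∀ p, ∑ j, ∑ q, (w p * w q) * (n p j * n q j)
        = ∑ q, (w p * w q) * ∑ j, n p j * n q j := by
      intro p
      rw [Finset.sum_comm]
      exact Finset.sum_congr rfl (fun q _ => by rw [Finset.mul_sum])
    rw [Finset.sum_congr rfl (fun p _ => e2 p)]
    have e3 : ∀ p q : Fin v, ∑ j, n p j * n q j
        = (lam:ℚ) + (if q = p then ((r:ℚ) - lam) else 0) := by
      intro p q
      by_cases h : q = p
      · subst h
        rw [F2s q]
        simp
      · rw [F2 p q (fun hh => h hh.symm)]
        simp [h]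
    have e4 : ∀ p, ∑ q, (w p * w q) * ((lam:ℚ) + (if q = p then ((r:ℚ) - lam) else 0))
        = ((r:ℚ) - lam) * w p ^ 2 + ((lam:ℚ) * w p) * (∑ q, w q) := by
      intro p
      have e5 : ∀ q, (w p * w q) * ((lam:ℚ) + (if q = p then ((r:ℚ) - lam) else 0))
          = ((lam:ℚ) * w p) * w q + (if q = p then ((r:ℚ) - lam) * (w p * w q) else 0) := by
        intro q
        split_ifs <;> ring
      rw [Finset.sum_congr rfl (fun q _ => e5 q), Finset.sum_add_distrib,
        Finset.sum_ite_eq' Finset.univ p, ← Finset.mul_sum]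
      simp only [Finset.mem_univ, if_true]
      ring
    calc ∑ p, ∑ q, (w p * w q) * ∑ j, n p j * n q j
        = ∑ p, (((r:ℚ) - lam) * w p ^ 2 + ((lam:ℚ) * w p) * (∑ q, w q)) := by
          refine Finset.sum_congr rfl (fun p _ => ?_)
          rw [Finset.sum_congr rfl (fun q _ => by rw [e3 p q]), e4 p]
      _ = ((r:ℚ) - lam) * ∑ p, w p ^ 2 := by
          rw [Finset.sum_add_distrib, ← Finset.mul_sum, ← Finset.sum_mul, sumW,
            mul_zero, add_zero]
  -- Cauchy-Schwarz
  have CS := Finset.sum_mul_sq_le_sq_mul_sq Finset.univ u t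
  rw [G, U2, B2, W2] at CS
  -- positivity facts
  have hsQ : (0:ℚ) < (s:ℚ) := by exact_mod_cast hs0
  have hbQ : (0:ℚ) < (b:ℚ) := by exact_mod_cast hb0
  have hkQ : (2:ℚ) ≤ (k:ℚ) := by exact_mod_cast hk2
  have hkvQ : (k:ℚ) < (v:ℚ) := by exact_mod_cast hkv
  have hW : (0:ℚ) < (s:ℚ)^2 * ((k:ℚ) * b * ((b:ℚ) - r)) := by
    refine mul_pos (pow_pos hsQ 2) (mul_pos (mul_pos (by linarith) hbQ) (by linarith))
  -- derive the key inequality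
  have step1 : (s:ℚ)^2 * ((k:ℚ) * b * ((b:ℚ) - r))
      ≤ (b:ℚ) * s * ((b:ℚ) - s) * ((r:ℚ) - lam) := by
    have h' : ((s:ℚ)^2 * ((k:ℚ) * b * ((b:ℚ) - r))) * ((s:ℚ)^2 * ((k:ℚ) * b * ((b:ℚ) - r)))
        ≤ ((b:ℚ) * s * ((b:ℚ) - s) * ((r:ℚ) - lam)) * ((s:ℚ)^2 * ((k:ℚ) * b * ((b:ℚ) - r))) := by
      calc ((s:ℚ)^2 * ((k:ℚ) * b * ((b:ℚ) - r))) * ((s:ℚ)^2 * ((k:ℚ) * b * ((b:ℚ) - r)))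
          = ((s:ℚ)^2 * ((k:ℚ) * b * ((b:ℚ) - r)))^2 := by ring
        _ ≤ (b:ℚ) * s * ((b:ℚ) - s) * (((r:ℚ) - lam) * ((s:ℚ)^2 * ((k:ℚ) * b * ((b:ℚ) - r)))) := CS
        _ = ((b:ℚ) * s * ((b:ℚ) - s) * ((r:ℚ) - lam)) * ((s:ℚ)^2 * ((k:ℚ) * b * ((b:ℚ) - r))) := by ring
    exact le_of_mul_le_mul_right h' hW
  have h5 : (s:ℚ) * k * ((b:ℚ) - r) ≤ ((b:ℚ) - s) * ((r:ℚ) - lam) := by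
    have hbs : (0:ℚ) < (b:ℚ) * s := mul_pos hbQ hsQ
    have h'' : ((b:ℚ) * s) * ((s:ℚ) * k * ((b:ℚ) - r))
        ≤ ((b:ℚ) * s) * (((b:ℚ) - s) * ((r:ℚ) - lam)) := by
      calc ((b:ℚ) * s) * ((s:ℚ) * k * ((b:ℚ) - r))
          = (s:ℚ)^2 * ((k:ℚ) * b * ((b:ℚ) - r)) := by ring
        _ ≤ (b:ℚ) * s * ((b:ℚ) - s) * ((r:ℚ) - lam) := step1
        _ = ((b:ℚ) * s) * (((b:ℚ) - s) * ((r:ℚ) - lam)) := by ring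
    exact le_of_mul_le_mul_left h'' hbs
  have e6 : ((r:ℚ) - lam) * ((s:ℚ) * v - b)
      = (s:ℚ) * k * ((b:ℚ) - r) - ((b:ℚ) - s) * ((r:ℚ) - lam) := by
    linear_combination (s:ℚ) * I1 + (s:ℚ) * I2
  have final : (s:ℚ) * v ≤ (b:ℚ) := by
    have hnp : ((r:ℚ) - lam) * ((s:ℚ) * v - b) ≤ 0 := by
      rw [e6]
      linarith only [h5]
    by_contra hcon
    push_neg at hcon
    have h1 : (0:ℚ) < (s:ℚ) * v - b := by linarith only [hcon]
    have h2 : (0:ℚ) < (r:ℚ) - lam := by linarith only [hrl]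
    have := mul_pos h2 h1
    linarith only [this, hnp]
  have : ((s * v : ℕ) : ℚ) ≤ (b:ℚ) := by push_cast; exact final
  exact_mod_cast this

/-- In a (v,k,λ)-BIBD with 2 ≤ k < v, any block occurs with multiplicity at most
    ⌊b/v⌋; consequently, if b < 2v then all blocks are distinct. -/
theorem block_multiplicity_bound (v b r k lam : ℕ) (hk2 : 2 ≤ k) (hkv : k < v)
    (B : Fin b → Finset (Fin v))
    (hcard : ∀ i, (B i).card = k)
    (hrep : ∀ p, (Finset.univ.filter (fun i => p ∈ B i)).card = r)
    (hpair : ∀ p q : Fin v, p ≠ q →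
      (Finset.univ.filter (fun i => p ∈ B i ∧ q ∈ B i)).card = lam) :
    (∀ i : Fin b, (Finset.univ.filter (fun j => B j = B i)).card ≤ b / v) ∧
    (b < 2 * v → Function.Injective B) := by
  have hv0 : 0 < v := by omega
  have main := fun i => mann_key v b r k lam hk2 hkv B hcard hrep hpair i
  constructor
  · intro i
    exact (Nat.le_div_iff_mul_le hv0).mpr (main i)
  · intro hb j j' hjj
    by_contra hne
    have hsub : ({j, j'} : Finset (Fin b)) ⊆ Finset.univ.filter (fun x => B x = B j') := by
      intro x hx
      simp only [Finset.mem_insert, Finset.mem_singleton] at hx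
      rcases hx with rfl | rfl <;> simp [hjj]
    have h2 : 2 ≤ (Finset.univ.filter (fun x => B x = B j')).card := by
      have := Finset.card_le_card hsub
      rwa [Finset.card_pair hne] at this
    have := main j'
    nlinarith
end
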